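/- Truth lemma for the term model: for any finite nonempty consistent pair p of closed formulas in a signature Σ with p⁺ a singleton, any world w of the canonical constant-domain model M[p], any w-assignment g, and any formula φ in the language of Σ such that φ^g ∈ Cl_{M_w}(p), one has M[p], w ⊩^g φ if and only if φ^g ∈ w⁺. -/

import Mathlib

namespace QRC1

/-- Strictly positive formulas of QRC₁ over a signature with constants `Cst`,
relation symbols `Rl`, and arity function `ar`.  Terms are either variables
(natural numbers, left) or constants (right). -/
inductive Fml (Cst Rl : Type) (ar : Rl → ℕ) : Type
  | top : Fml Cst Rl ar
  | rel (S : Rl) (ts : Fin (ar S) → ℕ ⊕ Cst) : Fml Cst Rl ar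
  | and (φ ψ : Fml Cst Rl ar) : Fml Cst Rl ar
  | dia (φ : Fml Cst Rl ar) : Fml Cst Rl ar
  | all (x : ℕ) (φ : Fml Cst Rl ar) : Fml Cst Rl ar

namespace Fml

variable {Cst Rl : Type} {ar : Rl → ℕ}

/-- Free variables of a formula. -/
def fv : Fml Cst Rl ar → Set ℕ
  | .top => ∅
  | .rel _ ts => {x | ∃ i, ts i = Sum.inl x}
  | .and φ ψ => fv φ ∪ fv ψ
  | .dia φ => fv φ
  | .all y φ => fv φ \ {y}

/-- A formula is closed when it has no free variables. -/
def Closed (φ : Fml Cst Rl ar) : Prop := φ.fv = ∅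

/-- Constants occurring in a formula. -/
def consts : Fml Cst Rl ar → Set Cst
  | .top => ∅
  | .rel _ ts => {c | ∃ i, ts i = Sum.inr c}
  | .and φ ψ => consts φ ∪ consts ψ
  | .dia φ => consts φ
  | .all _ φ => consts φ

/-- Substitution of a term for a variable, on terms. -/
def substT (x : ℕ) (t : ℕ ⊕ Cst) : ℕ ⊕ Cst → ℕ ⊕ Cst
  | .inl y => if y = x then t else .inl y
  | .inr c => .inr c

/-- `φ.subst x t` replaces all free occurrences of variable `x` in `φ` by the term `t`. -/
def subst : Fml Cst Rl ar → ℕ → (ℕ ⊕ Cst) → Fml Cst Rl ar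
  | .top, _, _ => .top
  | .rel S ts, x, t => .rel S (fun i => substT x t (ts i))
  | .and φ ψ, x, t => .and (φ.subst x t) (ψ.subst x t)
  | .dia φ, x, t => .dia (φ.subst x t)
  | .all y φ, x, t => if y = x then .all y φ else .all y (φ.subst x t)

/-- `FreeFor t x φ`: the term `t` is free for the variable `x` in `φ`, i.e. no
free occurrence of a variable of `t` becomes bound in `φ[x/t]`. -/
def FreeFor (t : ℕ ⊕ Cst) (x : ℕ) : Fml Cst Rl ar → Prop
  | .top => True
  | .rel _ _ => True
  | .and φ ψ => FreeFor t x φ ∧ FreeFor t x ψ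
  | .dia φ => FreeFor t x φ
  | .all y φ => x ∉ fv (Fml.all y φ) ∨ (t ≠ .inl y ∧ FreeFor t x φ)

/-- Modal depth. -/
def mdepth : Fml Cst Rl ar → ℕ
  | .top => 0
  | .rel _ _ => 0
  | .and φ ψ => max φ.mdepth ψ.mdepth
  | .dia φ => φ.mdepth + 1
  | .all _ φ => φ.mdepth

/-- Quantifier depth. -/
def udepth : Fml Cst Rl ar → ℕ
  | .top => 0
  | .rel _ _ => 0
  | .and φ ψ => max φ.udepth ψ.udepth
  | .dia φ => φ.udepth
  | .all _ φ => φ.udepth + 1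

/-- Number of distinct constants occurring in a formula. -/
noncomputable def cdepth (φ : Fml Cst Rl ar) : ℕ := φ.consts.ncard

/-- Size of a formula (for termination purposes). -/
def size : Fml Cst Rl ar → ℕ
  | .top => 1
  | .rel _ _ => 1
  | .and φ ψ => φ.size + ψ.size + 1
  | .dia φ => φ.size + 1
  | .all _ φ => φ.size + 1

theorem size_subst (φ : Fml Cst Rl ar) (x : ℕ) (t : ℕ ⊕ Cst) :
    (φ.subst x t).size = φ.size := by
  induction φ generalizing x t with
  | top => rfl
  | rel S ts => rfl
  | and φ ψ ihφ ihψ => simp [subst, size, ihφ, ihψ]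
  | dia φ ih => simp [subst, size, ih]
  | all y φ ih => by_cases h : y = x <;> simp [subst, h, size, ih]

/-- The closure of a formula under a set of constants `C`, where the
subformulas of `∀x φ` are all `φ[x/c]` for `c ∈ C`. -/
def cl (C : Set Cst) : Fml Cst Rl ar → Set (Fml Cst Rl ar)
  | .top => {.top}
  | .rel S ts => {.rel S ts, .top}
  | .and φ ψ => {.and φ ψ} ∪ φ.cl C ∪ ψ.cl C
  | .dia φ => {.dia φ} ∪ φ.cl C
  | .all x φ => {.all x φ} ∪ ⋃ c ∈ C, (φ.subst x (.inr c)).cl C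
termination_by φ => φ.size
decreasing_by all_goals (simp [size, size_subst]; try omega)

/-- Renaming of constants along a map `f` (used for signature extensions). -/
def mapC {Cst' : Type} (f : Cst → Cst') : Fml Cst Rl ar → Fml Cst' Rl ar
  | .top => .top
  | .rel S ts => .rel S (fun i => Sum.map id f (ts i))
  | .and φ ψ => .and (φ.mapC f) (ψ.mapC f)
  | .dia φ => .dia (φ.mapC f)
  | .all x φ => .all x (φ.mapC f)

/-- Simultaneous substitution of terms for variables. -/
def msubst (σ : ℕ → ℕ ⊕ Cst) : Fml Cst Rl ar → Fml Cst Rl ar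
  | .top => .top
  | .rel S ts => .rel S (fun i => match ts i with
      | .inl x => σ x
      | .inr c => .inr c)
  | .and φ ψ => .and (φ.msubst σ) (ψ.msubst σ)
  | .dia φ => .dia (φ.msubst σ)
  | .all x φ => .all x (φ.msubst (Function.update σ x (.inl x)))

/-- `φ^g`: replace every free variable `x` of `φ` by the constant `g x`. -/
def capp (g : ℕ → Cst) (φ : Fml Cst Rl ar) : Fml Cst Rl ar :=
  φ.msubst (fun x => .inr (g x))

end Fml

/-- The derivability relation `φ ⊢ ψ` of the calculus QRC₁. -/
inductive Der {Cst Rl : Type} {ar : Rl → ℕ} : Fml Cst Rl ar → Fml Cst Rl ar → Prop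
  | top (φ) : Der φ .top
  | refl (φ) : Der φ φ
  | andE1 (φ ψ) : Der (.and φ ψ) φ
  | andE2 (φ ψ) : Der (.and φ ψ) ψ
  | andI {φ ψ χ} : Der φ ψ → Der φ χ → Der φ (.and ψ χ)
  | cut {φ ψ χ} : Der φ ψ → Der ψ χ → Der φ χ
  | diaMono {φ ψ} : Der φ ψ → Der (.dia φ) (.dia ψ)
  | diaTrans (φ) : Der (.dia (.dia φ)) (.dia φ)
  | allI {φ ψ} (x) : Der φ ψ → x ∉ φ.fv → Der φ (.all x ψ)
  | allE {φ ψ} (x) (t : ℕ ⊕ Cst) : Der (φ.subst x t) ψ → Fml.FreeFor t x φ →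
      Der (.all x φ) ψ
  | inst {φ ψ} (x) (t : ℕ ⊕ Cst) : Der φ ψ → Fml.FreeFor t x φ → Fml.FreeFor t x ψ →
      Der (φ.subst x t) (ψ.subst x t)
  | genC {φ ψ} (x) (c : Cst) : Der (φ.subst x (.inr c)) (ψ.subst x (.inr c)) →
      c ∉ φ.consts → c ∉ ψ.consts → Der φ ψ

section Depths

variable {Cst Rl : Type} {ar : Rl → ℕ}

/-- Modal depth of a set of formulas (the supremum of the modal depths). -/
noncomputable def mdepthSet (Γ : Set (Fml Cst Rl ar)) : ℕ := sSup (Fml.mdepth '' Γ)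

/-- Quantifier depth of a set of formulas. -/
noncomputable def udepthSet (Γ : Set (Fml Cst Rl ar)) : ℕ := sSup (Fml.udepth '' Γ)

/-- Maximum number of distinct constants per formula in a set of formulas. -/
noncomputable def cdepthSet (Γ : Set (Fml Cst Rl ar)) : ℕ := sSup (Fml.cdepth '' Γ)

/-- Closure of a set of formulas under a set of constants. -/
def clSet (C : Set Cst) (Γ : Set (Fml Cst Rl ar)) : Set (Fml Cst Rl ar) :=
  ⋃ γ ∈ Γ, γ.cl C

/-- Conjunction of a finite list of formulas. -/
def conjList : List (Fml Cst Rl ar) → Fml Cst Rl ar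
  | [] => .top
  | φ :: L => .and φ (conjList L)

end Depths

/-- A pair `⟨p⁺, p⁻⟩` of sets of formulas. -/
structure Pair (Cst Rl : Type) (ar : Rl → ℕ) where
  pos : Set (Fml Cst Rl ar)
  neg : Set (Fml Cst Rl ar)

namespace Pair

variable {Cst Rl : Type} {ar : Rl → ℕ}

/-- All formulas of the pair are closed. -/
def ClosedP (p : Pair Cst Rl ar) : Prop := ∀ φ ∈ p.pos ∪ p.neg, φ.Closed

/-- Consistency: the conjunction of (finitely many formulas of) `p⁺` does not
derive any formula of `p⁻`. -/
def Consistent (p : Pair Cst Rl ar) : Prop :=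
  ∀ δ ∈ p.neg, ∀ L : List (Fml Cst Rl ar), (∀ χ ∈ L, χ ∈ p.pos) → ¬ Der (conjList L) δ

/-- `Φ`-maximality: every formula of `Φ` is in `p⁺` or in `p⁻`, and `p`
contains only formulas of `Φ`. -/
def MaximalIn (Φ : Set (Fml Cst Rl ar)) (p : Pair Cst Rl ar) : Prop :=
  (∀ χ ∈ Φ, χ ∈ p.pos ∨ χ ∈ p.neg) ∧ p.pos ∪ p.neg ⊆ Φ

/-- Fully witnessed: every negative universal has a constant witness. -/
def FullyWitnessed (p : Pair Cst Rl ar) : Prop :=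
  ∀ (x : ℕ) (φ : Fml Cst Rl ar), Fml.all x φ ∈ p.neg →
    ∃ c : Cst, φ.subst x (.inr c) ∈ p.neg

/-- `Φ`-maximal, consistent, fully witnessed (and closed) pair. -/
def MCW (Φ : Set (Fml Cst Rl ar)) (p : Pair Cst Rl ar) : Prop :=
  p.ClosedP ∧ p.MaximalIn Φ ∧ p.Consistent ∧ p.FullyWitnessed

end Pair

/-- The relation `R̂` between pairs. -/
def hatR {Cst Rl : Type} {ar : Rl → ℕ} (p q : Pair Cst Rl ar) : Prop :=
  (∀ φ : Fml Cst Rl ar, Fml.dia φ ∈ p.neg → φ ∈ q.neg ∧ Fml.dia φ ∈ q.neg) ∧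
  ∃ ψ : Fml Cst Rl ar, Fml.dia ψ ∈ p.pos ∧ Fml.dia ψ ∈ q.neg

/-- A relational model for QRC₁. -/
structure Model (Cst Rl : Type) (ar : Rl → ℕ) where
  W : Type
  R : W → W → Prop
  Dom : W → Type
  finDom : ∀ w, Finite (Dom w)
  η : ∀ w v, R w v → Dom w → Dom v
  I : ∀ w, Cst → Dom w
  J : ∀ w (S : Rl), Set (Fin (ar S) → Dom w)

namespace Model

variable {Cst Rl : Type} {ar : Rl → ℕ} (M : Model Cst Rl ar)

/-- Value of a term under a `w`-assignment. -/
def tval {w : M.W} (g : ℕ → M.Dom w) : ℕ ⊕ Cst → M.Dom w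
  | .inl x => g x
  | .inr c => M.I w c

/-- Kripke satisfaction `M, w ⊩^g φ`. -/
def Sat : (w : M.W) → (g : ℕ → M.Dom w) → Fml Cst Rl ar → Prop
  | _, _, .top => True
  | w, g, .rel S ts => (fun i => M.tval g (ts i)) ∈ M.J w S
  | w, g, .and φ ψ => Sat w g φ ∧ Sat w g ψ
  | w, g, .dia φ => ∃ (v : M.W) (h : M.R w v), Sat v (fun n => M.η w v h (g n)) φ
  | w, g, .all x φ => ∀ h : ℕ → M.Dom w, (∀ y, y ≠ x → h y = g y) → Sat w h φ

/-- Adequate models: transitive accessibility, transitive `η` functions, and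
concordant interpretation of constants. -/
structure Adequate : Prop where
  trans : Transitive M.R
  etaTrans : ∀ {w u v : M.W} (h1 : M.R w u) (h2 : M.R u v) (h3 : M.R w v),
    M.η w v h3 = M.η u v h2 ∘ M.η w u h1
  concord : ∀ {w u : M.W} (h : M.R w u) (c : Cst), M.I u c = M.η w u h (M.I w c)

/-- Constant domain: all worlds have the same domain. -/
def ConstantDomain : Prop := ∀ w v : M.W, M.Dom w = M.Dom v

end Model


/-- The canonical term model built on the MCW pairs (STATEMENT 16 support). -/
def termModel (Cst Rl : Type) (ar : Rl → ℕ) [Finite Cst] (p : Pair Cst Rl ar)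
    (R : {w : Pair Cst Rl ar // w.MCW (clSet Set.univ (p.pos ∪ p.neg))} →
         {w : Pair Cst Rl ar // w.MCW (clSet Set.univ (p.pos ∪ p.neg))} → Prop) :
    Model Cst Rl ar where
  W := {w : Pair Cst Rl ar // w.MCW (clSet Set.univ (p.pos ∪ p.neg))}
  R := R
  Dom := fun _ => Cst
  finDom := fun _ => inferInstance
  η := fun _ _ _ => id
  I := fun _ c => c
  J := fun w S => {d | Fml.rel S (fun i => Sum.inr (d i)) ∈ w.val.pos}
/-!
Induction on `φ`, for all assignments at once. Within the closure `Φ`, a world `w` is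
deductively closed (`χ ∈ Φ` derivable from `w⁺` lies in `w⁺`, as otherwise `χ ∈ w⁻` would
contradict consistency), which settles `⊤` and `∧`. For `◇φ`, a world `v` above `w` with
`φ^g ∈ v⁺` forces `◇φ^g ∈ w⁺`, since `◇φ^g ∈ w⁻` would put `φ^g ∈ v⁻` by `R ⊆ R̂`; the
converse is the existence property of `R`. For `∀x φ`, the domain consists of the constants,
so the instances of `(∀x φ)^g` are exactly the `φ^{g[x ↦ c]}`: derivability gives one
direction, full witnessing the other.
-/

namespace Fml

variable {Cst Rl : Type} {ar : Rl → ℕ}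

theorem mem_cl_self (C : Set Cst) (φ : Fml Cst Rl ar) : φ ∈ φ.cl C := by
  cases φ <;> simp [cl]

theorem cl_subset_of_mem {C : Set Cst} (φ : Fml Cst Rl ar) {ψ : Fml Cst Rl ar}
    (h : ψ ∈ φ.cl C) : ψ.cl C ⊆ φ.cl C := by
  induction φ using cl.induct generalizing ψ with
  | case1 => simp_all [cl]
  | case2 S ts =>
    rw [cl] at h
    rcases h with rfl | rfl <;> simp [cl]
  | case3 φ₁ φ₂ ih₁ ih₂ =>
    rw [cl] at h ⊢
    rcases h with (rfl | h) | h
    · rw [cl]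
    · exact (ih₁ h).trans (Set.subset_union_of_subset_left Set.subset_union_right _)
    · exact (ih₂ h).trans Set.subset_union_right
  | case4 φ₁ ih =>
    rw [cl] at h ⊢
    rcases h with rfl | h
    · rw [cl]
    · exact (ih h).trans Set.subset_union_right
  | case5 x φ₁ ih =>
    rw [cl] at h ⊢
    rcases h with rfl | h
    · rw [cl]
    · obtain ⟨c, hc, h⟩ := Set.mem_iUnion₂.mp h
      exact (ih c h).trans <| Set.subset_union_of_subset_right
        (Set.subset_biUnion_of_mem (u := fun c => (φ₁.subst x (.inr c)).cl C) hc) _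

theorem freeFor_inr (c : Cst) (x : ℕ) : ∀ φ : Fml Cst Rl ar, FreeFor (.inr c) x φ
  | .top | .rel _ _ => trivial
  | .and φ ψ => ⟨freeFor_inr c x φ, freeFor_inr c x ψ⟩
  | .dia φ => freeFor_inr c x φ
  | .all _ φ => .inr ⟨Sum.inr_ne_inl, freeFor_inr c x φ⟩

-- `hσ`: every variable is sent to itself or to a constant, so substituting after `σ` cannot
-- capture anything.
theorem msubst_subst {σ : ℕ → ℕ ⊕ Cst} (hσ : ∀ y z, σ y = .inl z → z = y) {x : ℕ}
    (hx : σ x = .inl x) (t : ℕ ⊕ Cst) (φ : Fml Cst Rl ar) :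
    (φ.msubst σ).subst x t = φ.msubst (Function.update σ x t) := by
  induction φ generalizing σ with
  | top => rfl
  | rel S ts =>
    simp only [msubst, subst, rel.injEq, heq_eq_eq, true_and]
    funext i
    rcases ts i with y | c
    · by_cases hyx : y = x
      · subst hyx; simp [hx, substT]
      · rcases hy : σ y with z | c
        · obtain rfl := hσ y z hy
          simp [substT, hyx, hy]
        · simp [substT, hyx, hy]
    · rfl
  | and φ ψ ihφ ihψ => simp only [msubst, subst, ihφ hσ hx, ihψ hσ hx]
  | dia φ ih => simp only [msubst, subst, ih hσ hx]
  | all y φ ih =>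
    by_cases hyx : y = x
    · subst hyx; simp [msubst, subst]
    · have hσ' : ∀ u z, Function.update σ y (.inl y) u = .inl z → z = u := by
        intro u z h
        by_cases huy : u = y
        · subst huy; simpa using h.symm
        · exact hσ u z (by simpa [huy] using h)
      simp only [msubst, subst, if_neg hyx,
        ih hσ' (by simpa [Function.update_of_ne (Ne.symm hyx)] using hx),
        Function.update_comm (Ne.symm hyx)]

theorem capp_top (g : ℕ → Cst) : (top : Fml Cst Rl ar).capp g = top := rfl

theorem capp_and (g : ℕ → Cst) (φ ψ : Fml Cst Rl ar) :
    (and φ ψ).capp g = and (φ.capp g) (ψ.capp g) := rfl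

theorem capp_dia (g : ℕ → Cst) (φ : Fml Cst Rl ar) : (dia φ).capp g = dia (φ.capp g) := rfl

theorem capp_all (g : ℕ → Cst) (x : ℕ) (φ : Fml Cst Rl ar) :
    (all x φ).capp g = all x (φ.msubst (Function.update (fun y => .inr (g y)) x (.inl x))) :=
  rfl

theorem subst_capp_all_body (g : ℕ → Cst) (x : ℕ) (c : Cst) (φ : Fml Cst Rl ar) :
    (φ.msubst (Function.update (fun y => .inr (g y)) x (.inl x))).subst x (.inr c)
      = φ.capp (Function.update g x c) := by
  have hσ : ∀ y z, Function.update (fun y => (.inr (g y) : ℕ ⊕ Cst)) x (.inl x) y = .inl z →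
      z = y := by
    intro y z h
    by_cases hyx : y = x
    · subst hyx; simpa using h.symm
    · simp [hyx] at h
  rw [msubst_subst hσ (by simp), Function.update_idem, capp]
  congr 1
  funext y
  by_cases hyx : y = x <;> simp [hyx]

end Fml

section Closure

variable {Cst Rl : Type} {ar : Rl → ℕ}

theorem mem_clSet_of_mem_cl {C : Set Cst} {Γ : Set (Fml Cst Rl ar)} {χ ψ : Fml Cst Rl ar}
    (hχ : χ ∈ clSet C Γ) (hψ : ψ ∈ χ.cl C) : ψ ∈ clSet C Γ := by
  obtain ⟨γ, hγ, hχγ⟩ := Set.mem_iUnion₂.mp hχ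
  exact Set.mem_iUnion₂.mpr ⟨γ, hγ, Fml.cl_subset_of_mem γ hχγ hψ⟩

variable {C : Set Cst} {Γ : Set (Fml Cst Rl ar)}

theorem of_and_mem_clSet {φ ψ : Fml Cst Rl ar} (h : Fml.and φ ψ ∈ clSet C Γ) :
    φ ∈ clSet C Γ ∧ ψ ∈ clSet C Γ :=
  ⟨mem_clSet_of_mem_cl h (by simp [Fml.cl, Fml.mem_cl_self]),
    mem_clSet_of_mem_cl h (by simp [Fml.cl, Fml.mem_cl_self])⟩

theorem of_dia_mem_clSet {φ : Fml Cst Rl ar} (h : Fml.dia φ ∈ clSet C Γ) : φ ∈ clSet C Γ :=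
  mem_clSet_of_mem_cl h (by simp [Fml.cl, Fml.mem_cl_self])

theorem subst_mem_clSet_of_all_mem {x : ℕ} {φ : Fml Cst Rl ar} (h : Fml.all x φ ∈ clSet C Γ)
    {c : Cst} (hc : c ∈ C) : φ.subst x (.inr c) ∈ clSet C Γ :=
  mem_clSet_of_mem_cl h (by simpa [Fml.cl] using .inr ⟨c, hc, Fml.mem_cl_self _ _⟩)

end Closure

namespace Pair.MCW

variable {Cst Rl : Type} {ar : Rl → ℕ} {Φ : Set (Fml Cst Rl ar)} {w : Pair Cst Rl ar}

theorem notMem_neg_of_mem_pos (hw : w.MCW Φ) {χ : Fml Cst Rl ar} (h : χ ∈ w.pos) :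
    χ ∉ w.neg :=
  fun hn => hw.2.2.1 χ hn [χ] (by simpa using h) (Der.andE1 _ _)

theorem mem_pos_of_der (hw : w.MCW Φ) {χ : Fml Cst Rl ar} (hχ : χ ∈ Φ)
    {L : List (Fml Cst Rl ar)} (hL : ∀ ψ ∈ L, ψ ∈ w.pos) (hd : Der (conjList L) χ) :
    χ ∈ w.pos :=
  (hw.2.1.1 χ hχ).resolve_right fun hn => hw.2.2.1 χ hn L hL hd

theorem mem_pos_of_der_single (hw : w.MCW Φ) {ψ χ : Fml Cst Rl ar} (hχ : χ ∈ Φ)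
    (hψ : ψ ∈ w.pos) (hd : Der ψ χ) : χ ∈ w.pos :=
  hw.mem_pos_of_der hχ (L := [ψ]) (by simpa using hψ) (.cut (.andE1 _ _) hd)

theorem top_mem_pos (hw : w.MCW Φ) (h : Fml.top ∈ Φ) : Fml.top ∈ w.pos :=
  hw.mem_pos_of_der h (L := []) (by simp) (.top _)

theorem and_mem_pos_iff (hw : w.MCW Φ) {φ ψ : Fml Cst Rl ar} (h : Fml.and φ ψ ∈ Φ)
    (hφ : φ ∈ Φ) (hψ : ψ ∈ Φ) : Fml.and φ ψ ∈ w.pos ↔ φ ∈ w.pos ∧ ψ ∈ w.pos := by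
  refine ⟨fun hand => ⟨?_, ?_⟩, fun ⟨h₁, h₂⟩ => ?_⟩
  · exact hw.mem_pos_of_der_single hφ hand (.andE1 _ _)
  · exact hw.mem_pos_of_der_single hψ hand (.andE2 _ _)
  · refine hw.mem_pos_of_der h (L := [φ, ψ]) (by simp [h₁, h₂]) ?_
    exact .andI (.andE1 _ _) (.cut (.andE2 _ _) (.andE1 _ _))

theorem all_mem_pos_iff (hw : w.MCW Φ) {x : ℕ} {φ : Fml Cst Rl ar} (h : Fml.all x φ ∈ Φ)
    (hφ : ∀ c, φ.subst x (.inr c) ∈ Φ) :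
    Fml.all x φ ∈ w.pos ↔ ∀ c, φ.subst x (.inr c) ∈ w.pos := by
  refine ⟨fun hall c => ?_, fun hinst => ?_⟩
  · exact hw.mem_pos_of_der_single (hφ c) hall (.allE x _ (.refl _) (Fml.freeFor_inr c x φ))
  · refine (hw.2.1.1 _ h).resolve_right fun hn => ?_
    obtain ⟨c, hc⟩ := hw.2.2.2 x φ hn
    exact hw.notMem_neg_of_mem_pos (hinst c) hc

theorem dia_mem_pos_iff {R : {w : Pair Cst Rl ar // w.MCW Φ} → {w // w.MCW Φ} → Prop}
    (hRhat : ∀ w v, R w v → hatR w.val v.val)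
    (hRex : ∀ w (φ : Fml Cst Rl ar), Fml.dia φ ∈ w.val.pos → ∃ v, R w v ∧ φ ∈ v.val.pos)
    (w : {w : Pair Cst Rl ar // w.MCW Φ}) {φ : Fml Cst Rl ar} (h : Fml.dia φ ∈ Φ) :
    Fml.dia φ ∈ w.val.pos ↔ ∃ v, R w v ∧ φ ∈ v.val.pos := by
  refine ⟨hRex w φ, fun ⟨v, hwv, hv⟩ => (w.2.2.1.1 _ h).resolve_right fun hn => ?_⟩
  exact v.2.notMem_neg_of_mem_pos hv ((hRhat w v hwv).1 φ hn).1

end Pair.MCW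

theorem Model.sat_all_iff {Cst Rl : Type} {ar : Rl → ℕ} (M : Model Cst Rl ar) {w : M.W}
    (g : ℕ → M.Dom w) (x : ℕ) (φ : Fml Cst Rl ar) :
    M.Sat w g (.all x φ) ↔ ∀ d, M.Sat w (Function.update g x d) φ := by
  refine ⟨fun h d => h _ fun y hy => Function.update_of_ne hy _ _, fun h g' hg' => ?_⟩
  rw [Function.eq_update_iff.mpr ⟨rfl, hg'⟩]
  exact h _

namespace termModel

variable {Cst Rl : Type} {ar : Rl → ℕ} [Finite Cst] {p : Pair Cst Rl ar}
  {R : {w : Pair Cst Rl ar // w.MCW (clSet Set.univ (p.pos ∪ p.neg))} →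
    {w : Pair Cst Rl ar // w.MCW (clSet Set.univ (p.pos ∪ p.neg))} → Prop}
  (w : (termModel Cst Rl ar p R).W) (g : ℕ → Cst)

theorem sat_rel_iff (S : Rl) (ts : Fin (ar S) → ℕ ⊕ Cst) :
    (termModel Cst Rl ar p R).Sat w g (.rel S ts) ↔ (Fml.rel S ts).capp g ∈ w.val.pos := by
  suffices (Fml.rel S ts).capp g
      = .rel S fun i => .inr ((termModel Cst Rl ar p R).tval (w := w) g (ts i)) by
    rw [this]
    exact Iff.rfl
  simp only [Fml.capp, Fml.msubst, Fml.rel.injEq, heq_eq_eq, true_and]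
  funext i
  cases ts i <;> rfl

theorem sat_dia_iff (φ : Fml Cst Rl ar) :
    (termModel Cst Rl ar p R).Sat w g (.dia φ) ↔
      ∃ v, R w v ∧ (termModel Cst Rl ar p R).Sat v g φ :=
  ⟨fun ⟨v, hwv, hv⟩ => ⟨v, hwv, hv⟩, fun ⟨v, hwv, hv⟩ => ⟨v, hwv, hv⟩⟩

theorem sat_all_iff (x : ℕ) (φ : Fml Cst Rl ar) :
    (termModel Cst Rl ar p R).Sat w g (.all x φ) ↔
      ∀ c, (termModel Cst Rl ar p R).Sat w (Function.update g x c) φ :=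
  Model.sat_all_iff (termModel Cst Rl ar p R) (w := w) g x φ

end termModel

theorem truth_lemma_general (Cst Rl : Type) (ar : Rl → ℕ) [Finite Cst]
    (p : Pair Cst Rl ar)
    (R : {w : Pair Cst Rl ar // w.MCW (clSet Set.univ (p.pos ∪ p.neg))} →
         {w : Pair Cst Rl ar // w.MCW (clSet Set.univ (p.pos ∪ p.neg))} → Prop)
    (hRhat : ∀ w v, R w v → hatR w.val v.val)
    (hRex : ∀ w (φ : Fml Cst Rl ar), Fml.dia φ ∈ w.val.pos →
      ∃ v, R w v ∧ φ ∈ v.val.pos)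
    (w : (termModel Cst Rl ar p R).W) (g : ℕ → Cst) (φ : Fml Cst Rl ar)
    (hφ : φ.capp g ∈ clSet Set.univ (p.pos ∪ p.neg)) :
    (termModel Cst Rl ar p R).Sat w g φ ↔ φ.capp g ∈ w.val.pos := by
  induction φ generalizing w g with
  | top =>
    rw [Fml.capp_top] at hφ ⊢
    exact iff_of_true trivial (w.2.top_mem_pos hφ)
  | rel S ts => exact termModel.sat_rel_iff w g S ts
  | and φ ψ ihφ ihψ =>
    rw [Fml.capp_and] at hφ ⊢
    obtain ⟨hφ₁, hφ₂⟩ := of_and_mem_clSet hφ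
    exact (and_congr (ihφ w g hφ₁) (ihψ w g hφ₂)).trans (w.2.and_mem_pos_iff hφ hφ₁ hφ₂).symm
  | dia φ ih =>
    rw [Fml.capp_dia] at hφ ⊢
    rw [termModel.sat_dia_iff, Pair.MCW.dia_mem_pos_iff hRhat hRex w hφ]
    exact exists_congr fun v => and_congr_right fun _ => ih v g (of_dia_mem_clSet hφ)
  | all x φ ih =>
    rw [Fml.capp_all] at hφ ⊢
    have hinst c := subst_mem_clSet_of_all_mem hφ (Set.mem_univ c)
    rw [termModel.sat_all_iff, w.2.all_mem_pos_iff hφ hinst]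
    simp only [Fml.subst_capp_all_body] at hinst ⊢
    exact forall_congr' fun c => ih w _ (hinst c)

theorem truth_lemma (Cst Rl : Type) (ar : Rl → ℕ) [Finite Cst]
    (p : Pair Cst Rl ar) (hposfin : p.pos.Finite) (hnegfin : p.neg.Finite)
    (hne : (p.pos ∪ p.neg).Nonempty) (hclosed : p.ClosedP) (hcons : p.Consistent)
    (hsing : ∃ φ₀ : Fml Cst Rl ar, p.pos = {φ₀})
    (hcard : 2 * cdepthSet (p.pos ∪ p.neg) + 2 * udepthSet (p.pos ∪ p.neg)
      < Nat.card Cst)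
    (R : {w : Pair Cst Rl ar // w.MCW (clSet Set.univ (p.pos ∪ p.neg))} →
         {w : Pair Cst Rl ar // w.MCW (clSet Set.univ (p.pos ∪ p.neg))} → Prop)
    (hRhat : ∀ w v, R w v → hatR w.val v.val)
    (hRtrans : Transitive R)
    (hRex : ∀ w (φ : Fml Cst Rl ar), Fml.dia φ ∈ w.val.pos →
      ∃ v, R w v ∧ φ ∈ v.val.pos)
    (w : (termModel Cst Rl ar p R).W) (g : ℕ → Cst) (φ : Fml Cst Rl ar)
    (hφ : φ.capp g ∈ clSet Set.univ (p.pos ∪ p.neg)) :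
    (termModel Cst Rl ar p R).Sat w g φ ↔ φ.capp g ∈ w.val.pos :=
  truth_lemma_general Cst Rl ar p R hRhat hRex w g φ hφ

end QRC1
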